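/- arXiv:1810.09700 — 5 statements merged into one kernel-verified Lean document; each statement's English description precedes it below -/
import Mathlib

section
/- For every positive vector z in R^n, T(z) = J_T(z) · z, where J_T(z) = diag(Tz)² · Aᵀ · diag(1./(Az))² · A is the Jacobian of T at z. That is, the nonlinear map T acts on each positive vector as multiplication by its own Jacobian evaluated at that vector. -/
open Matrix

/-- For every positive vector z, T(z) = J_T(z) · z. -/
theorem stmt_1 (n : ℕ) (A : Matrix (Fin n) (Fin n) ℝ) (hA : ∀ i j, 0 < A i j)
    (z : Fin n → ℝ) (hz : ∀ i, 0 < z i) :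
    (Aᵀ *ᵥ (A *ᵥ z)⁻¹)⁻¹ =
      ((Matrix.diagonal ((Aᵀ *ᵥ (A *ᵥ z)⁻¹)⁻¹)) ^ 2 * Aᵀ *
       (Matrix.diagonal ((A *ᵥ z)⁻¹)) ^ 2 * A) *ᵥ z := by
  rcases Nat.eq_zero_or_pos n with h0 | hn
  · subst h0; funext i; exact absurd i.2 (by simp)
  have : Nonempty (Fin n) := ⟨⟨0, hn⟩⟩
  set w := A *ᵥ z with hw
  have hwpos : ∀ j, 0 < w j := fun j =>
    Finset.sum_pos (fun k _ => mul_pos (hA j k) (hz k)) Finset.univ_nonempty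
  set u := Aᵀ *ᵥ w⁻¹ with hu
  have hupos : ∀ i, 0 < u i := fun i =>
    Finset.sum_pos (fun k _ => mul_pos (hA k i) (inv_pos.mpr (hwpos k))) Finset.univ_nonempty
  have key1 : (Matrix.diagonal (w⁻¹)) ^ 2 *ᵥ w = w⁻¹ := by
    funext j
    simp [sq, Matrix.diagonal_mul_diagonal, Matrix.mulVec_diagonal, Pi.inv_apply]
    field_simp
  calc u⁻¹ = (Matrix.diagonal (u⁻¹)) ^ 2 *ᵥ u := by
        funext i
        simp [sq, Matrix.diagonal_mul_diagonal, Matrix.mulVec_diagonal, Pi.inv_apply]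
        field_simp
    _ = ((Matrix.diagonal (u⁻¹)) ^ 2 * Aᵀ * (Matrix.diagonal (w⁻¹)) ^ 2 * A) *ᵥ z := by
        rw [← Matrix.mulVec_mulVec, ← Matrix.mulVec_mulVec, ← Matrix.mulVec_mulVec, ← hw, key1,
          ← hu]
end

section
/- A positive vector x is a fixed point of T (i.e., x = T x) if and only if x is an eigenvector of its own Jacobian with eigenvalue 1, i.e., x = J_T(x) · x. -/
/-!
The map `T` is positively homogeneous of degree one, so Euler's identity gives `J_T(x) x = T x`
for every `x`; hence `x = T x` and `x = J_T(x) x` are the same equation. Algebraically the identity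
is the cancellation `d⁻² d = d⁻¹`, used once for `d = A x` and once for `d = Aᵀ (A x)⁻¹`.
-/

open Matrix

section

variable {K : Type*} [DivisionRing K]

theorem inv_sq_mul_self (a : K) : a⁻¹ ^ 2 * a = a⁻¹ := by
  simpa only [sq, inv_inv] using mul_self_mul_inv a⁻¹

variable {m ι : Type*} [Fintype m] [Fintype ι] [DecidableEq m] [DecidableEq ι]

theorem Matrix.diagonal_inv_sq_mulVec_self (d : ι → K) : diagonal d⁻¹ ^ 2 *ᵥ d = d⁻¹ := by
  funext i
  simp only [diagonal_pow, mulVec_diagonal, Pi.pow_apply, Pi.inv_apply, inv_sq_mul_self]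

def matrixScalingMap (A : Matrix m ι K) (x : ι → K) : ι → K :=
  (Aᵀ *ᵥ (A *ᵥ x)⁻¹)⁻¹

/-- The Jacobian `J_T(x)` of `T = matrixScalingMap A`. -/
def matrixScalingJacobian (A : Matrix m ι K) (x : ι → K) : Matrix ι ι K :=
  diagonal (matrixScalingMap A x) ^ 2 * Aᵀ * diagonal (A *ᵥ x)⁻¹ ^ 2 * A

theorem matrixScalingJacobian_mulVec_self (A : Matrix m ι K) (x : ι → K) :
    matrixScalingJacobian A x *ᵥ x = matrixScalingMap A x := by
  simp only [matrixScalingJacobian, matrixScalingMap, ← mulVec_mulVec,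
    diagonal_inv_sq_mulVec_self]

end

theorem stmt_6_general (n : ℕ) (A : Matrix (Fin n) (Fin n) ℝ)
    (x : Fin n → ℝ) :
    x = (Aᵀ *ᵥ (A *ᵥ x)⁻¹)⁻¹ ↔
      x = ((Matrix.diagonal ((Aᵀ *ᵥ (A *ᵥ x)⁻¹)⁻¹)) ^ 2 * Aᵀ *
           (Matrix.diagonal ((A *ᵥ x)⁻¹)) ^ 2 * A) *ᵥ x := by
  change x = matrixScalingMap A x ↔ x = matrixScalingJacobian A x *ᵥ x
  rw [matrixScalingJacobian_mulVec_self]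

/-- x is a fixed point of T iff x = J_T(x) · x. -/
theorem stmt_6 (n : ℕ) (A : Matrix (Fin n) (Fin n) ℝ) (hA : ∀ i j, 0 < A i j)
    (x : Fin n → ℝ) (hx : ∀ i, 0 < x i) :
    x = (Aᵀ *ᵥ (A *ᵥ x)⁻¹)⁻¹ ↔
      x = ((Matrix.diagonal ((Aᵀ *ᵥ (A *ᵥ x)⁻¹)⁻¹)) ^ 2 * Aᵀ *
           (Matrix.diagonal ((A *ᵥ x)⁻¹)) ^ 2 * A) *ᵥ x :=
  stmt_6_general n A x
end

section
/- If x is a positive fixed point of T, then J_T(x) = diag(x) · Pᵀ·P · diag(x)⁻¹, where P = diag(1./(Ax)) · A · diag(x); hence the eigenvalues of J_T(x) are exactly the squares of the singular values of P. -/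
open Matrix

/-- At a fixed point, J_T(x) = diag(x) · Pᵀ·P · diag(x)⁻¹ with
    P = diag(1./(Ax)) · A · diag(x); hence the eigenvalues of J_T(x) are the
    squares of the singular values of P (i.e. the eigenvalues of Pᵀ·P). -/
theorem stmt_8 (n : ℕ) (A : Matrix (Fin n) (Fin n) ℝ) (hA : ∀ i j, 0 < A i j)
    (x : Fin n → ℝ) (hx : ∀ i, 0 < x i)
    (hfix : x = (Aᵀ *ᵥ (A *ᵥ x)⁻¹)⁻¹) :
    ((Matrix.diagonal ((Aᵀ *ᵥ (A *ᵥ x)⁻¹)⁻¹)) ^ 2 * Aᵀ *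
       (Matrix.diagonal ((A *ᵥ x)⁻¹)) ^ 2 * A) =
      Matrix.diagonal x *
        ((Matrix.diagonal ((A *ᵥ x)⁻¹) * A * Matrix.diagonal x)ᵀ *
         (Matrix.diagonal ((A *ᵥ x)⁻¹) * A * Matrix.diagonal x)) *
        (Matrix.diagonal x)⁻¹ ∧
    spectrum ℝ
        ((Matrix.diagonal ((Aᵀ *ᵥ (A *ᵥ x)⁻¹)⁻¹)) ^ 2 * Aᵀ *
          (Matrix.diagonal ((A *ᵥ x)⁻¹)) ^ 2 * A) =
      spectrum ℝ
        ((Matrix.diagonal ((A *ᵥ x)⁻¹) * A * Matrix.diagonal x)ᵀ *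
         (Matrix.diagonal ((A *ᵥ x)⁻¹) * A * Matrix.diagonal x)) := by
  have hxne : ∀ i, x i ≠ 0 := fun i => (hx i).ne'
  have hdetu : IsUnit (Matrix.diagonal x).det := by
    rw [Matrix.det_diagonal]
    exact (Finset.prod_ne_zero_iff.mpr fun i _ => hxne i).isUnit
  have hxu : (Fin n → ℝ)ˣ := ⟨x, x⁻¹,
    funext fun i => mul_inv_cancel₀ (hxne i),
    funext fun i => inv_mul_cancel₀ (hxne i)⟩
  have hinv : (Matrix.diagonal x)⁻¹ = Matrix.diagonal x⁻¹ := by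
    rw [Matrix.inv_diagonal,
      Ring.inverse_unit (⟨x, x⁻¹, funext fun i => mul_inv_cancel₀ (hxne i),
        funext fun i => inv_mul_cancel₀ (hxne i)⟩ : (Fin n → ℝ)ˣ)]
    rfl
  have hcancel : Matrix.diagonal x * (Matrix.diagonal x)⁻¹ = 1 := by
    rw [hinv, Matrix.diagonal_mul_diagonal]
    convert Matrix.diagonal_one using 2
    ext i
    exact mul_inv_cancel₀ (hxne i)
  have key :
      ((Matrix.diagonal ((Aᵀ *ᵥ (A *ᵥ x)⁻¹)⁻¹)) ^ 2 * Aᵀ *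
         (Matrix.diagonal ((A *ᵥ x)⁻¹)) ^ 2 * A) =
        Matrix.diagonal x *
          ((Matrix.diagonal ((A *ᵥ x)⁻¹) * A * Matrix.diagonal x)ᵀ *
           (Matrix.diagonal ((A *ᵥ x)⁻¹) * A * Matrix.diagonal x)) *
          (Matrix.diagonal x)⁻¹ := by
    rw [← hfix]
    simp only [Matrix.transpose_mul, Matrix.transpose_transpose,
      Matrix.diagonal_transpose, sq]
    simp only [Matrix.mul_assoc]
    rw [hcancel, mul_one]
  refine ⟨key, ?_⟩
  rw [key]
  set u : (Matrix (Fin n) (Fin n) ℝ)ˣ := Matrix.nonsingInvUnit _ hdetu with hu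
  have h1 : (u : Matrix (Fin n) (Fin n) ℝ) = Matrix.diagonal x := rfl
  have h2 : ((u⁻¹ : (Matrix (Fin n) (Fin n) ℝ)ˣ) : Matrix (Fin n) (Fin n) ℝ) =
      (Matrix.diagonal x)⁻¹ := by
    rw [Matrix.coe_units_inv, h1]
  rw [← h2, ← h1, spectrum.units_conjugate]
end

section
/- If x is a positive fixed point of T and A has all positive entries, then 1 is a simple eigenvalue of J_T(x), it equals the spectral radius of J_T(x), and x is a corresponding (positive) eigenvector. -/
/-!
Let `M` be a positive matrix with a positive eigenvector `x`, `M x = r x`. For any real `v`,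
compare `v` with the least multiple `t x` dominating it: `t x - v` is nonnegative and vanishes
somewhere, so if `M v - r v` is a multiple of `x` then positivity of `M` forces `v ∈ ℝ x`.
Hence the generalized eigenspace of `r` is the line `ℝ x`, i.e. `r` has algebraic multiplicity
one. The same comparison applied to `‖v‖` bounds every complex eigenvalue by `r`, so `r` is the
spectral radius. At a fixed point of `T`, `J_T(x)` is such a matrix with `J_T(x) x = x`.
-/

open Matrix Finset Module Polynomial

namespace Matrix

variable {ι : Type*} [Fintype ι] {M : Matrix ι ι ℝ}

lemma eq_zero_of_mulVec_apply_nonpos (hM : ∀ i j, 0 < M i j) {u : ι → ℝ} (hu : 0 ≤ u) {i : ι}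
    (h : (M *ᵥ u) i ≤ 0) : u = 0 := by
  have hterm : ∀ j ∈ univ, 0 ≤ M i j * u j := fun j _ => mul_nonneg (hM i j).le (hu j)
  have hsum : ∑ j, M i j * u j = 0 := le_antisymm h (sum_nonneg hterm)
  funext j
  exact (mul_eq_zero.mp ((sum_eq_zero_iff_of_nonneg hterm).mp hsum j (mem_univ j))).resolve_left
    (hM i j).ne'

section PositiveEigenvector

variable (hM : ∀ i j, 0 < M i j) {x : ι → ℝ} (hx : ∀ i, 0 < x i) {r : ℝ}
  (hMx : M *ᵥ x = r • x)
include hM hx hMx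

lemma mem_span_of_mulVec_eq_smul_add_smul_of_nonneg {v : ι → ℝ} {c : ℝ}
    (hv : M *ᵥ v = r • v + c • x) (hc : 0 ≤ c) : v ∈ ℝ ∙ x := by
  cases isEmpty_or_nonempty ι
  · simp [Subsingleton.elim v 0]
  obtain ⟨i₀, hi₀⟩ := Finite.exists_max fun i => v i / x i
  set t := v i₀ / x i₀
  have hu : 0 ≤ t • x - v := fun j => by
    have := (div_le_iff₀ (hx j)).mp (hi₀ j)
    simp only [Pi.zero_apply, Pi.sub_apply, Pi.smul_apply, smul_eq_mul]
    linarith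
  have hui₀ : (t • x - v) i₀ = 0 := by
    simp [t, div_mul_cancel₀ _ (hx i₀).ne']
  have hMu : M *ᵥ (t • x - v) = r • (t • x - v) - c • x := by
    rw [mulVec_sub, mulVec_smul, hMx, hv, smul_sub, smul_comm t r]; abel
  have hzero := eq_zero_of_mulVec_apply_nonpos hM hu (i := i₀) (by
    rw [hMu]
    simp only [Pi.sub_apply, Pi.smul_apply, hui₀, smul_eq_mul, mul_zero, zero_sub, neg_nonpos]
    exact mul_nonneg hc (hx i₀).le)
  exact Submodule.mem_span_singleton.mpr ⟨t, sub_eq_zero.mp hzero⟩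

lemma mem_span_of_mulVec_eq_smul_add_smul {v : ι → ℝ} {c : ℝ}
    (hv : M *ᵥ v = r • v + c • x) : v ∈ ℝ ∙ x := by
  rcases le_total 0 c with hc | hc
  · exact mem_span_of_mulVec_eq_smul_add_smul_of_nonneg hM hx hMx hv hc
  · refine (Submodule.neg_mem_iff _).mp
      (mem_span_of_mulVec_eq_smul_add_smul_of_nonneg hM hx hMx (c := -c) ?_ (neg_nonneg.mpr hc))
    rw [mulVec_neg, hv, neg_add, smul_neg, neg_smul]

lemma maxGenEigenspace_mulVecLin_eq_span : End.maxGenEigenspace M.mulVecLin r = ℝ ∙ x := by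
  set N := M.mulVecLin - r • (1 : End ℝ (ι → ℝ))
  have hN : ∀ v, N v = M *ᵥ v - r • v := fun v => by simp [N]
  have hker : ∀ k v, (N ^ k) v = 0 → v ∈ ℝ ∙ x := by
    intro k
    induction k with
    | zero => simp
    | succ k ih =>
      intro v hv
      rw [pow_succ, End.mul_apply] at hv
      obtain ⟨c, hc⟩ := Submodule.mem_span_singleton.mp (ih _ hv)
      refine mem_span_of_mulVec_eq_smul_add_smul hM hx hMx (c := c) ?_
      rw [hc, hN, add_sub_cancel]
  refine le_antisymm (fun v hv => ?_) ?_
  · obtain ⟨k, hk⟩ := (End.mem_maxGenEigenspace _ _ _).mp hv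
    exact hker k v hk
  · refine (Submodule.span_singleton_le_iff_mem _ _).mpr ((End.mem_maxGenEigenspace _ _ _).mpr ?_)
    exact ⟨1, by rw [pow_one, hN, hMx, sub_self]⟩

lemma rootMultiplicity_charpoly_eq_one [DecidableEq ι] [Nonempty ι] :
    M.charpoly.rootMultiplicity r = 1 := by
  have hx0 : x ≠ 0 := fun h => (hx (Classical.arbitrary ι)).ne' (congrFun h _)
  rw [← charpoly_mulVecLin, ← LinearMap.finrank_maxGenEigenspace_eq,
    maxGenEigenspace_mulVecLin_eq_span hM hx hMx, finrank_span_singleton hx0]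

lemma isRoot_charpoly [DecidableEq ι] [Nonempty ι] : M.charpoly.IsRoot r := by
  rw [← rootMultiplicity_pos (charpoly_monic M).ne_zero,
    rootMultiplicity_charpoly_eq_one hM hx hMx]
  exact one_pos

lemma norm_le_of_mem_spectrum_map_ofReal [DecidableEq ι] {μ : ℂ}
    (hμ : μ ∈ spectrum ℂ (M.map Complex.ofReal)) : ‖μ‖ ≤ r := by
  rw [← spectrum_toLin', ← End.hasEigenvalue_iff_mem_spectrum] at hμ
  obtain ⟨v, hv⟩ := hμ.exists_hasEigenvector
  have hMv : M.map Complex.ofReal *ᵥ v = μ • v := by simpa using hv.apply_eq_smul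
  obtain ⟨j, hj⟩ := Function.ne_iff.mp hv.2
  have : Nonempty ι := ⟨j⟩
  obtain ⟨i₀, hi₀⟩ := Finite.exists_max fun i => ‖v i‖ / x i
  set t := ‖v i₀‖ / x i₀
  have hbound : ∀ j, ‖v j‖ ≤ t * x j := fun j => (div_le_iff₀ (hx j)).mp (hi₀ j)
  have hvi₀ : t * x i₀ = ‖v i₀‖ := div_mul_cancel₀ _ (hx i₀).ne'
  have hvi₀_pos : 0 < ‖v i₀‖ := by
    rw [← hvi₀]
    exact mul_pos ((div_pos (norm_pos_iff.mpr hj) (hx j)).trans_le (hi₀ j)) (hx i₀)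
  refine le_of_mul_le_mul_right ?_ hvi₀_pos
  calc ‖μ‖ * ‖v i₀‖ = ‖∑ j, (M i₀ j : ℂ) * v j‖ := by
        rw [← norm_mul, ← smul_eq_mul, ← Pi.smul_apply, ← hMv]; rfl
    _ ≤ ∑ j, M i₀ j * ‖v j‖ := by
        refine (norm_sum_le _ _).trans_eq (sum_congr rfl fun j _ => ?_)
        rw [norm_mul, Complex.norm_real, Real.norm_of_nonneg (hM i₀ j).le]
    _ ≤ ∑ j, M i₀ j * (t * x j) :=
        sum_le_sum fun j _ => mul_le_mul_of_nonneg_left (hbound j) (hM i₀ j).le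
    _ = t * (M *ᵥ x) i₀ := by simp only [mulVec, dotProduct, mul_sum, mul_left_comm]
    _ = r * ‖v i₀‖ := by rw [hMx, Pi.smul_apply, smul_eq_mul, mul_left_comm, hvi₀]

lemma spectralRadius_map_ofReal_eq [DecidableEq ι] [Nonempty ι] :
    spectralRadius ℂ (M.map Complex.ofReal) = ENNReal.ofReal r := by
  have hr : (r : ℂ) ∈ spectrum ℂ (M.map Complex.ofReal) := by
    rw [mem_spectrum_iff_isRoot_charpoly]
    change (M.map Complex.ofRealHom).charpoly.IsRoot (Complex.ofRealHom r)
    rw [charpoly_map, isRoot_map_iff Complex.ofReal_injective]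
    exact isRoot_charpoly hM hx hMx
  have hr₀ : 0 ≤ r := by
    simpa using (norm_nonneg _).trans (norm_le_of_mem_spectrum_map_ofReal hM hx hMx hr)
  refine le_antisymm (iSup₂_le fun μ hμ => ?_) (le_iSup₂_of_le (r : ℂ) hr ?_)
  · rw [← ENNReal.ofReal_coe_nnreal, coe_nnnorm]
    exact ENNReal.ofReal_le_ofReal (norm_le_of_mem_spectrum_map_ofReal hM hx hMx hμ)
  · rw [← ENNReal.ofReal_coe_nnreal, coe_nnnorm, Complex.norm_real, Real.norm_of_nonneg hr₀]

end PositiveEigenvector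

lemma mulVec_apply_pos [Nonempty ι] {A : Matrix ι ι ℝ} (hA : ∀ i j, 0 < A i j) {x : ι → ℝ}
    (hx : ∀ i, 0 < x i) (i : ι) : 0 < (A *ᵥ x) i :=
  sum_pos (fun j _ => mul_pos (hA i j) (hx j)) univ_nonempty

lemma diagonal_mul_transpose_mul_diagonal_mul_apply_pos [Nonempty ι] [DecidableEq ι]
    {A : Matrix ι ι ℝ} (hA : ∀ i j, 0 < A i j) {d e : ι → ℝ} (hd : ∀ i, 0 < d i)
    (he : ∀ i, 0 < e i) (i j : ι) : 0 < (diagonal d * Aᵀ * diagonal e * A) i j := by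
  rw [mul_apply]
  refine sum_pos (fun k _ => mul_pos ?_ (hA k j)) univ_nonempty
  rw [mul_diagonal, diagonal_mul, transpose_apply]
  exact mul_pos (mul_pos (hd i) (hA k i)) (he k)

lemma jacobian_mulVec_eq_self_of_isFixedPt [DecidableEq ι] {A : Matrix ι ι ℝ} {x : ι → ℝ}
    (hfix : x = (Aᵀ *ᵥ (A *ᵥ x)⁻¹)⁻¹) :
    (diagonal x ^ 2 * Aᵀ * diagonal ((A *ᵥ x)⁻¹) ^ 2 * A) *ᵥ x = x := by
  have hAt : Aᵀ *ᵥ (A *ᵥ x)⁻¹ = x⁻¹ := by rw [hfix, inv_inv, ← hfix]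
  have hy : diagonal ((A *ᵥ x)⁻¹ ^ 2) *ᵥ (A *ᵥ x) = (A *ᵥ x)⁻¹ := funext fun i => by
    simpa [mulVec_diagonal, sq] using mul_self_mul_inv ((A *ᵥ x) i)⁻¹
  simp only [diagonal_pow, ← mulVec_mulVec, hy, hAt]
  funext i
  rw [mulVec_diagonal, Pi.pow_apply, Pi.inv_apply, sq, mul_self_mul_inv]

end Matrix

/-- At a positive fixed point x, 1 is a simple eigenvalue of J_T(x) equal to its
    spectral radius, and x is a corresponding positive eigenvector. -/
theorem stmt_9 (n : ℕ) (hn : 0 < n) (A : Matrix (Fin n) (Fin n) ℝ) (hA : ∀ i j, 0 < A i j)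
    (x : Fin n → ℝ) (hx : ∀ i, 0 < x i)
    (hfix : x = (Aᵀ *ᵥ (A *ᵥ x)⁻¹)⁻¹) :
    ((Matrix.diagonal x) ^ 2 * Aᵀ * (Matrix.diagonal ((A *ᵥ x)⁻¹)) ^ 2 * A).charpoly.rootMultiplicity 1 = 1 ∧
    (1 : ℝ) ∈ spectrum ℝ ((Matrix.diagonal x) ^ 2 * Aᵀ * (Matrix.diagonal ((A *ᵥ x)⁻¹)) ^ 2 * A) ∧
    spectralRadius ℂ
        (((Matrix.diagonal x) ^ 2 * Aᵀ * (Matrix.diagonal ((A *ᵥ x)⁻¹)) ^ 2 * A).map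
          Complex.ofReal) = 1 ∧
    ((Matrix.diagonal x) ^ 2 * Aᵀ * (Matrix.diagonal ((A *ᵥ x)⁻¹)) ^ 2 * A) *ᵥ x = x := by
  have : Nonempty (Fin n) := ⟨⟨0, hn⟩⟩
  set J := (Matrix.diagonal x) ^ 2 * Aᵀ * (Matrix.diagonal ((A *ᵥ x)⁻¹)) ^ 2 * A
  have hJx : J *ᵥ x = x := jacobian_mulVec_eq_self_of_isFixedPt hfix
  have hJ : ∀ i j, 0 < J i j := by
    simp only [J, diagonal_pow]
    exact diagonal_mul_transpose_mul_diagonal_mul_apply_pos hA (fun i => pow_pos (hx i) 2)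
      (fun i => pow_pos (inv_pos.mpr (mulVec_apply_pos hA hx i)) 2)
  have hJx' : J *ᵥ x = (1 : ℝ) • x := by rw [one_smul, hJx]
  refine ⟨rootMultiplicity_charpoly_eq_one hJ hx hJx',
    mem_spectrum_iff_isRoot_charpoly.mpr (isRoot_charpoly hJ hx hJx'), ?_, hJx⟩
  rw [spectralRadius_map_ofReal_eq hJ hx hJx', ENNReal.ofReal_one]
end

section
/- If x is a positive fixed point of T, then the error of the Sinkhorn–Knopp iteration satisfies a local linear contraction: the derivative of T at x, namely J_T(x), has spectral radius 1 with the eigenvalue 1 simple, and the second largest eigenvalue of J_T(x) equals σ₂², the square of the second largest singular value of the doubly stochastic matrix P = diag(1./(Ax))·A·diag(x). -/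
/-!
Write `y = 1 ./ (A x)` and `P = D_y A D_x`. Then `J_T(x) = D_x · (D_x Aᵀ D_y² A)`, and swapping
the two factors gives `PᵀP`, so `J_T(x)` and `PᵀP` have the same characteristic polynomial, hence
the same spectrum and root multiplicities. The fixed-point equation says precisely that `P` is
doubly stochastic, so `S = PᵀP` is a symmetric stochastic matrix with positive entries.
Gershgorin's discs of `S` lie in the unit disc and `S 1 = 1`, so its spectral radius is `1`.
By the maximum principle every fixed vector of `S` is constant, so the `1`-eigenspace is a line,
and since `S` is symmetric its geometric and algebraic multiplicities agree.
-/

open Matrix Module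

namespace Matrix

section Positive

variable {ι : Type*} [Fintype ι]

theorem mul_apply_pos {R : Type*} [Semiring R] [PartialOrder R] [IsStrictOrderedRing R]
    [Nonempty ι] {M N : Matrix ι ι R} (hM : ∀ i j, 0 < M i j) (hN : ∀ i j, 0 < N i j)
    (i j : ι) : 0 < (M * N) i j :=
  Finset.sum_pos (fun k _ => mul_pos (hM i k) (hN k j)) Finset.univ_nonempty

end Positive

variable {ι : Type*} [Fintype ι] [DecidableEq ι]

theorem spectrum_eq_of_charpoly_eq {K : Type*} [Field K] {M N : Matrix ι ι K}
    (h : M.charpoly = N.charpoly) : spectrum K M = spectrum K N := by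
  ext μ
  rw [mem_spectrum_iff_isRoot_charpoly, mem_spectrum_iff_isRoot_charpoly, h]

theorem one_mem_spectrum_of_mulVec_one {K : Type*} [Field K] [Nonempty ι] {M : Matrix ι ι K}
    (hM : M *ᵥ 1 = 1) : (1 : K) ∈ spectrum K M := by
  rw [← spectrum_toLin']
  refine End.HasEigenvalue.mem_spectrum
    (End.hasEigenvalue_of_hasEigenvector (x := 1) ⟨?_, one_ne_zero⟩)
  rw [End.mem_eigenspace_iff, toLin'_apply, hM, one_smul]

theorem IsHermitian.rootMultiplicity_charpoly_eq_finrank_eigenspace {𝕜 : Type*} [RCLike 𝕜]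
    {A : Matrix ι ι 𝕜} (hA : A.IsHermitian) (μ : 𝕜) :
    A.charpoly.rootMultiplicity μ = finrank 𝕜 (End.eigenspace (toEuclideanLin A) μ) := by
  have hsemisimple := (isSymmetric_toEuclideanLin_iff.mpr hA).isFinitelySemisimple
  rw [← hsemisimple.maxGenEigenspace_eq_eigenspace, LinearMap.finrank_maxGenEigenspace_eq,
    toEuclideanLin_eq_toLin_orthonormal, charpoly_toLin]

theorem apply_eq_of_mulVec_eq_self {R : Type*} [Field R] [LinearOrder R] [IsStrictOrderedRing R]
    {S : Matrix ι ι R} (hpos : ∀ i j, 0 < S i j) (hS : S ∈ rowStochastic R ι)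
    {v : ι → R} (hv : S *ᵥ v = v) (i j : ι) : v i = v j := by
  obtain ⟨m, -, hm⟩ := Finset.exists_max_image Finset.univ v ⟨i, Finset.mem_univ i⟩
  have hdefect : ∑ k, S m k * (v m - v k) = 0 := by
    simp only [mul_sub, Finset.sum_sub_distrib, ← Finset.sum_mul,
      sum_row_of_mem_rowStochastic hS, one_mul]
    have hvm := congrFun hv m
    simp only [mulVec, dotProduct] at hvm
    rw [hvm, sub_self]
  have hconst : ∀ k, v k = v m := by
    intro k
    have hk := (Finset.sum_eq_zero_iff_of_nonneg fun k _ =>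
      mul_nonneg (hpos m k).le (sub_nonneg.mpr (hm k (Finset.mem_univ k)))).mp hdefect k
      (Finset.mem_univ k)
    linarith [(mul_eq_zero.mp hk).resolve_left (hpos m k).ne']
  rw [hconst i, hconst j]

theorem eigenspace_toEuclideanLin_one_eq_span {S : Matrix ι ι ℝ} (hpos : ∀ i j, 0 < S i j)
    (hS : S ∈ rowStochastic ℝ ι) :
    End.eigenspace (toEuclideanLin S) 1 = ℝ ∙ WithLp.toLp 2 (1 : ι → ℝ) := by
  apply le_antisymm
  · intro v hv
    rw [End.mem_eigenspace_iff, one_smul] at hv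
    have hfix : S *ᵥ v.ofLp = v.ofLp := congrArg WithLp.ofLp hv
    rcases isEmpty_or_nonempty ι with hι | ⟨⟨i₀⟩⟩
    · exact Subsingleton.elim v 0 ▸ Submodule.zero_mem _
    · refine Submodule.mem_span_singleton.mpr ⟨v i₀, ?_⟩
      ext i
      simp [apply_eq_of_mulVec_eq_self hpos hS hfix i i₀]
  · rw [Submodule.span_singleton_le_iff_mem, End.mem_eigenspace_iff, one_smul]
    simp [toLpLin_toLp, one_vecMul_of_mem_rowStochastic hS]

theorem rootMultiplicity_one_charpoly_eq_one [Nonempty ι] {S : Matrix ι ι ℝ} (hsymm : S.IsSymm)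
    (hpos : ∀ i j, 0 < S i j) (hS : S ∈ rowStochastic ℝ ι) :
    S.charpoly.rootMultiplicity 1 = 1 := by
  rw [(isHermitian_iff_isSymm.mpr hsymm).rootMultiplicity_charpoly_eq_finrank_eigenspace,
    eigenspace_toEuclideanLin_one_eq_span hpos hS, finrank_span_singleton]
  simp

theorem norm_le_one_of_mem_spectrum_map_ofReal {S : Matrix ι ι ℝ} (hS : S ∈ rowStochastic ℝ ι)
    {μ : ℂ} (hμ : μ ∈ spectrum ℂ (S.map Complex.ofReal)) : ‖μ‖ ≤ 1 := by
  rw [← spectrum_toLin', ← End.hasEigenvalue_iff_mem_spectrum] at hμ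
  obtain ⟨k, hk⟩ := eigenvalue_mem_ball hμ
  set S' := S.map Complex.ofReal
  have hrow : ∑ j, ‖S' k j‖ = 1 := by
    simp only [S', map_apply, Complex.norm_real, Real.norm_eq_abs,
      abs_of_nonneg (nonneg_of_mem_rowStochastic hS), sum_row_of_mem_rowStochastic hS]
  calc ‖μ‖ ≤ ‖μ - S' k k‖ + ‖S' k k‖ := norm_le_norm_sub_add _ _
    _ ≤ ∑ j ∈ Finset.univ.erase k, ‖S' k j‖ + ‖S' k k‖ := by
      gcongr
      exact mem_closedBall_iff_norm.mp hk
    _ = 1 := by rw [Finset.sum_erase_add _ _ (Finset.mem_univ k), hrow]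

theorem spectralRadius_map_ofReal_eq_one [Nonempty ι] {S : Matrix ι ι ℝ}
    (hS : S ∈ rowStochastic ℝ ι) : spectralRadius ℂ (S.map Complex.ofReal) = 1 := by
  refine le_antisymm (iSup₂_le fun μ hμ => ?_) ?_
  · exact_mod_cast (norm_le_one_of_mem_spectrum_map_ofReal hS hμ : ‖μ‖₊ ≤ 1)
  · have h1 : (1 : ℂ) ∈ spectrum ℂ (S.map Complex.ofReal) := by
      refine one_mem_spectrum_of_mulVec_one ?_
      ext i
      simp [mulVec, dotProduct, ← Complex.ofReal_sum, sum_row_of_mem_rowStochastic hS]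
    calc (1 : ENNReal) = ‖(1 : ℂ)‖₊ := by simp
      _ ≤ spectralRadius ℂ (S.map Complex.ofReal) :=
        le_iSup₂ (f := fun μ (_ : μ ∈ spectrum ℂ _) => (‖μ‖₊ : ENNReal)) 1 h1

theorem charpoly_diagonal_sq_mul_transpose_mul_diagonal_sq_mul {R : Type*} [CommRing R]
    (A : Matrix ι ι R) (x y : ι → R) :
    (diagonal x ^ 2 * Aᵀ * diagonal y ^ 2 * A).charpoly =
      ((diagonal y * A * diagonal x)ᵀ * (diagonal y * A * diagonal x)).charpoly := by
  have h : diagonal x ^ 2 * Aᵀ * diagonal y ^ 2 * A =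
      diagonal x * (diagonal x * Aᵀ * diagonal y ^ 2 * A) := by
    simp only [pow_two, Matrix.mul_assoc]
  rw [h, charpoly_mul_comm]
  simp only [transpose_mul, diagonal_transpose, pow_two, Matrix.mul_assoc]

theorem diagonal_inv_mulVec_mul_mul_diagonal_mem_doublyStochastic {R : Type*} [Field R]
    [LinearOrder R] [IsStrictOrderedRing R] {A : Matrix ι ι R} {x : ι → R}
    (hA : ∀ i j, 0 ≤ A i j) (hx : ∀ i, 0 < x i) (hAx : ∀ i, 0 < (A *ᵥ x) i)
    (hfix : x = (Aᵀ *ᵥ (A *ᵥ x)⁻¹)⁻¹) :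
    diagonal (A *ᵥ x)⁻¹ * A * diagonal x ∈ doublyStochastic R ι := by
  simp only [mem_doublyStochastic_iff_sum, mul_diagonal, diagonal_mul, Pi.inv_apply]
  refine ⟨fun i j => ?_, fun i => ?_, fun j => ?_⟩
  · exact mul_nonneg (mul_nonneg (inv_pos.mpr (hAx i)).le (hA i j)) (hx j).le
  · simp only [mul_assoc, ← Finset.mul_sum]
    exact inv_mul_cancel₀ (hAx i).ne'
  · have hxj : x j = ((Aᵀ *ᵥ (A *ᵥ x)⁻¹) j)⁻¹ := congrFun hfix j
    have hcol : ∑ i, ((A *ᵥ x) i)⁻¹ * A i j = (Aᵀ *ᵥ (A *ᵥ x)⁻¹) j := by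
      simp only [mulVec, dotProduct, transpose_apply, Pi.inv_apply, mul_comm]
    rw [← Finset.sum_mul, hcol, hxj]
    refine mul_inv_cancel₀ fun h => (hx j).ne' ?_
    simpa [h] using hxj

end Matrix

/-- At a positive fixed point x, J_T(x) has spectral radius 1, the eigenvalue 1 is
    simple, and the second largest eigenvalue of J_T(x) equals σ₂², the square of
    the second largest singular value of P = diag(1./(Ax))·A·diag(x), i.e. the
    second largest eigenvalue of PᵀP. -/
theorem stmt_18 (n : ℕ) (hn : 0 < n) (A : Matrix (Fin n) (Fin n) ℝ) (hA : ∀ i j, 0 < A i j)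
    (x : Fin n → ℝ) (hx : ∀ i, 0 < x i)
    (hfix : x = (Aᵀ *ᵥ (A *ᵥ x)⁻¹)⁻¹) :
    spectralRadius ℂ
        (((Matrix.diagonal x) ^ 2 * Aᵀ * (Matrix.diagonal ((A *ᵥ x)⁻¹)) ^ 2 * A).map
          Complex.ofReal) = 1 ∧
    ((Matrix.diagonal x) ^ 2 * Aᵀ * (Matrix.diagonal ((A *ᵥ x)⁻¹)) ^ 2 * A).charpoly.rootMultiplicity 1 = 1 ∧
    sSup (spectrum ℝ ((Matrix.diagonal x) ^ 2 * Aᵀ * (Matrix.diagonal ((A *ᵥ x)⁻¹)) ^ 2 * A) \ {1}) =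
      sSup (spectrum ℝ
          ((Matrix.diagonal ((A *ᵥ x)⁻¹) * A * Matrix.diagonal x)ᵀ *
           (Matrix.diagonal ((A *ᵥ x)⁻¹) * A * Matrix.diagonal x)) \ {1}) := by
  have : Nonempty (Fin n) := ⟨⟨0, hn⟩⟩
  have hchar := charpoly_diagonal_sq_mul_transpose_mul_diagonal_sq_mul A x (A *ᵥ x)⁻¹
  set P := diagonal (A *ᵥ x)⁻¹ * A * diagonal x with hP
  have hAx : ∀ i, 0 < (A *ᵥ x) i := fun i =>
    Finset.sum_pos (fun j _ => mul_pos (hA i j) (hx j)) Finset.univ_nonempty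
  have hPpos : ∀ i j, 0 < P i j := fun i j => by
    simp only [hP, mul_diagonal, diagonal_mul, Pi.inv_apply]
    exact mul_pos (mul_pos (inv_pos.mpr (hAx i)) (hA i j)) (hx j)
  have hPds : P ∈ doublyStochastic ℝ (Fin n) :=
    diagonal_inv_mulVec_mul_mul_diagonal_mem_doublyStochastic (fun i j => (hA i j).le) hx hAx hfix
  have hS : Pᵀ * P ∈ rowStochastic ℝ (Fin n) :=
    (mem_doublyStochastic_iff_mem_rowStochastic_and_mem_colStochastic.mp
      (mul_mem (transpose_mem_doublyStochastic_iff.mpr hPds) hPds)).1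
  refine ⟨?_, ?_, ?_⟩
  · have hcharℂ : ((diagonal x ^ 2 * Aᵀ * diagonal (A *ᵥ x)⁻¹ ^ 2 * A).map Complex.ofReal).charpoly =
        ((Pᵀ * P).map Complex.ofReal).charpoly := by
      rw [show (Complex.ofReal : ℝ → ℂ) = Complex.ofRealHom from rfl, charpoly_map, charpoly_map,
        hchar]
    rw [spectralRadius, spectrum_eq_of_charpoly_eq hcharℂ]
    exact spectralRadius_map_ofReal_eq_one hS
  · rw [hchar]
    exact rootMultiplicity_one_charpoly_eq_one (isSymm_transpose_mul_self P)
      (mul_apply_pos (fun i j => hPpos j i) hPpos) hS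
  · rw [spectrum_eq_of_charpoly_eq hchar]
end
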